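/- The one-parameter family of Bol algebra structures 𝔅₀₆^α (α ∈ ℂ) on ℂ⁴, where 𝔅₀₆^α is given by [e₁,e₂]=e₃, [e₁,e₃]=e₄, [e₂,e₃]=e₄, [e₁,e₂,e₃]=e₄, [e₂,e₃,e₁]=(α−1)e₄, [e₁,e₃,e₂]=α e₄, degenerates (as a parametric family) to the structure 𝓛₂₉ given by [e₁,e₂]=e₃, [e₁,e₃]=e₄, [e₂,e₃]=e₄, [e₁,e₃,e₂]=e₄, [e₂,e₃,e₁]=e₄. -/
import Mathlib


open Filter Matrix Topology

/-- ℂ⁴ -/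
abbrev V4 : Type := Fin 4 → ℂ

/-- GL₄(ℂ) -/
abbrev GL4 := Matrix.GeneralLinearGroup (Fin 4) ℂ

/-- structure constants of a bilinear map on ℂ⁴: `μ i j` is the value on `(eᵢ, eⱼ)`. -/
abbrev Bil4 := Fin 4 → Fin 4 → V4

/-- structure constants of a trilinear map on ℂ⁴. -/
abbrev Tril4 := Fin 4 → Fin 4 → Fin 4 → V4

/-- standard basis vectors -/
noncomputable def e4 (k : Fin 4) : V4 := Pi.single k (1 : ℂ)

/-- action of `g ∈ GL₄(ℂ)` on a bilinear map: `(g·μ)(x,y) = g μ(g⁻¹x, g⁻¹y)`,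
in structure constants. -/
noncomputable def actBil (g : GL4) (μ : Bil4) : Bil4 := fun i j =>
  (g : Matrix (Fin 4) (Fin 4) ℂ).mulVec
    (∑ p, ∑ q,
      (((g⁻¹ : GL4) : Matrix (Fin 4) (Fin 4) ℂ) p i *
       ((g⁻¹ : GL4) : Matrix (Fin 4) (Fin 4) ℂ) q j) • μ p q)

/-- action of `g ∈ GL₄(ℂ)` on a trilinear map:
`(g·τ)(x,y,z) = g τ(g⁻¹x, g⁻¹y, g⁻¹z)`, in structure constants. -/
noncomputable def actTril (g : GL4) (τ : Tril4) : Tril4 := fun i j k =>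
  (g : Matrix (Fin 4) (Fin 4) ℂ).mulVec
    (∑ p, ∑ q, ∑ r,
      (((g⁻¹ : GL4) : Matrix (Fin 4) (Fin 4) ℂ) p i *
       ((g⁻¹ : GL4) : Matrix (Fin 4) (Fin 4) ℂ) q j *
       ((g⁻¹ : GL4) : Matrix (Fin 4) (Fin 4) ℂ) r k) • τ p q r)

/-- the parametric family `(μ_α, τ_α)` degenerates to `(lam,sig)`: there are maps
`f : ℂ∖{0} → ℂ` and `g : ℂ∖{0} → GL₄(ℂ)` with `g(t)·μ_{f(t)} → lam`
and `g(t)·τ_{f(t)} → sig` as `t → 0`. -/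
def DegeneratesFam (μ : ℂ → Bil4) (τ : ℂ → Tril4) (lam : Bil4) (sig : Tril4) : Prop :=
  ∃ f : ℂ → ℂ, ∃ g : ℂ → GL4,
    Tendsto (fun t => actBil (g t) (μ (f t))) (𝓝[≠] (0 : ℂ)) (𝓝 lam) ∧
    Tendsto (fun t => actTril (g t) (τ (f t))) (𝓝[≠] (0 : ℂ)) (𝓝 sig)

noncomputable def μB06 : Bil4 := fun i j =>
  if i = (0 : Fin 4) ∧ j = (1 : Fin 4) then e4 2
  else if i = (1 : Fin 4) ∧ j = (0 : Fin 4) then -(e4 2)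
  else if i = (0 : Fin 4) ∧ j = (2 : Fin 4) then e4 3
  else if i = (2 : Fin 4) ∧ j = (0 : Fin 4) then -(e4 3)
  else if i = (1 : Fin 4) ∧ j = (2 : Fin 4) then e4 3
  else if i = (2 : Fin 4) ∧ j = (1 : Fin 4) then -(e4 3)
  else 0

noncomputable def τB06 (α : ℂ) : Tril4 := fun i j k =>
  if i = (0 : Fin 4) ∧ j = (1 : Fin 4) ∧ k = (2 : Fin 4) then e4 3
  else if i = (1 : Fin 4) ∧ j = (0 : Fin 4) ∧ k = (2 : Fin 4) then -(e4 3)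
  else if i = (1 : Fin 4) ∧ j = (2 : Fin 4) ∧ k = (0 : Fin 4) then (α - 1) • e4 3
  else if i = (2 : Fin 4) ∧ j = (1 : Fin 4) ∧ k = (0 : Fin 4) then -((α - 1) • e4 3)
  else if i = (0 : Fin 4) ∧ j = (2 : Fin 4) ∧ k = (1 : Fin 4) then α • e4 3
  else if i = (2 : Fin 4) ∧ j = (0 : Fin 4) ∧ k = (1 : Fin 4) then -(α • e4 3)
  else 0

noncomputable def μL29 : Bil4 := fun i j =>
  if i = (0 : Fin 4) ∧ j = (1 : Fin 4) then e4 2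
  else if i = (1 : Fin 4) ∧ j = (0 : Fin 4) then -(e4 2)
  else if i = (0 : Fin 4) ∧ j = (2 : Fin 4) then e4 3
  else if i = (2 : Fin 4) ∧ j = (0 : Fin 4) then -(e4 3)
  else if i = (1 : Fin 4) ∧ j = (2 : Fin 4) then e4 3
  else if i = (2 : Fin 4) ∧ j = (1 : Fin 4) then -(e4 3)
  else 0

noncomputable def τL29 : Tril4 := fun i j k =>
  if i = (0 : Fin 4) ∧ j = (2 : Fin 4) ∧ k = (1 : Fin 4) then e4 3
  else if i = (2 : Fin 4) ∧ j = (0 : Fin 4) ∧ k = (1 : Fin 4) then -(e4 3)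
  else if i = (1 : Fin 4) ∧ j = (2 : Fin 4) ∧ k = (0 : Fin 4) then e4 3
  else if i = (2 : Fin 4) ∧ j = (1 : Fin 4) ∧ k = (0 : Fin 4) then -(e4 3)
  else 0


noncomputable def dF (t : ℂ) : Fin 4 → ℂ := ![t⁻¹, t⁻¹, t⁻¹*t⁻¹, t⁻¹*t⁻¹*t⁻¹]
noncomputable def dI (t : ℂ) : Fin 4 → ℂ := ![t, t, t*t, t*t*t]

lemma dFI (t : ℂ) (h : t ≠ 0) : dF t * dI t = 1 := by
  funext i; fin_cases i <;> simp [dF, dI] <;> field_simp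

lemma dIF (t : ℂ) (h : t ≠ 0) : dI t * dF t = 1 := by
  funext i; fin_cases i <;> simp [dI, dF] <;> field_simp

noncomputable def gmat (t : ℂ) : GL4 :=
  if h : t = 0 then 1 else
  ⟨Matrix.diagonal (dF t), Matrix.diagonal (dI t),
   by rw [Matrix.diagonal_mul_diagonal]; rw [show (fun i => dF t i * dI t i) = fun _ => 1 from funext fun i => congrFun (dFI t h) i]; exact Matrix.diagonal_one,
   by rw [Matrix.diagonal_mul_diagonal]; rw [show (fun i => dI t i * dF t i) = fun _ => 1 from funext fun i => congrFun (dIF t h) i]; exact Matrix.diagonal_one⟩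

lemma gmat_val (t : ℂ) (h : t ≠ 0) :
    ((gmat t : GL4) : Matrix (Fin 4) (Fin 4) ℂ) = Matrix.diagonal (dF t) := by
  simp [gmat, h]

lemma gmat_inv (t : ℂ) (h : t ≠ 0) :
    (((gmat t)⁻¹ : GL4) : Matrix (Fin 4) (Fin 4) ℂ) = Matrix.diagonal (dI t) := by
  simp [gmat, h]

lemma actBil_diag (t : ℂ) (h : t ≠ 0) (μ : Bil4) (i j : Fin 4) :
    actBil (gmat t) μ i j = fun l => dI t i * dI t j * (dF t l * μ i j l) := by
  funext l
  simp [actBil, gmat_val t h, gmat_inv t h, Matrix.mulVec_diagonal, Finset.sum_apply,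
    Matrix.diagonal_apply, ite_mul, zero_mul, ite_smul, zero_smul, smul_eq_mul]
  ring

lemma actTril_diag (t : ℂ) (h : t ≠ 0) (τ : Tril4) (i j k : Fin 4) :
    actTril (gmat t) τ i j k = fun l => dI t i * dI t j * dI t k * (dF t l * τ i j k l) := by
  funext l
  simp [actTril, gmat_val t h, gmat_inv t h, Matrix.mulVec_diagonal, Finset.sum_apply,
    Matrix.diagonal_apply, ite_mul, zero_mul, ite_smul, zero_smul, smul_eq_mul]
  ring

noncomputable def D0 : Tril4 := fun i j k =>
  if i = (0 : Fin 4) ∧ j = (1 : Fin 4) ∧ k = (2 : Fin 4) then e4 3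
  else if i = (1 : Fin 4) ∧ j = (0 : Fin 4) ∧ k = (2 : Fin 4) then -(e4 3)
  else if i = (1 : Fin 4) ∧ j = (2 : Fin 4) ∧ k = (0 : Fin 4) then -(e4 3)
  else if i = (2 : Fin 4) ∧ j = (1 : Fin 4) ∧ k = (0 : Fin 4) then e4 3
  else 0

lemma bil_eq (t : ℂ) (h : t ≠ 0) : actBil (gmat t) μB06 = μL29 := by
  funext i j
  rw [actBil_diag t h]
  fin_cases i <;> fin_cases j <;> funext l <;> fin_cases l <;>
    simp [μB06, μL29, e4, dF, dI, Pi.single, Function.update] <;> field_simp <;> ring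

set_option maxHeartbeats 4000000 in
lemma tril_eq (t : ℂ) (h : t ≠ 0) :
    actTril (gmat t) (τB06 t⁻¹) = τL29 + t • D0 := by
  funext i j k
  rw [actTril_diag t h]
  fin_cases i <;> fin_cases j <;> fin_cases k <;> funext l <;> fin_cases l <;>
    simp [τB06, τL29, D0, e4, dF, dI, Pi.single, Function.update, Pi.add_apply, Pi.smul_apply,
      smul_eq_mul] <;> (try field_simp) <;> (try (left; ring)) <;> (try ring)

/-- the family 𝔅₀₆^α degenerates to 𝓛₂₉. -/
theorem stmt11 : DegeneratesFam (fun _ => μB06) τB06 μL29 τL29 := by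
  refine ⟨fun t => t⁻¹, gmat, ?_, ?_⟩
  · apply Tendsto.congr' (f₁ := fun _ => μL29)
    · filter_upwards [self_mem_nhdsWithin] with t ht
      exact (bil_eq t ht).symm
    · exact tendsto_const_nhds
  · apply Tendsto.congr' (f₁ := fun t => τL29 + t • D0)
    · filter_upwards [self_mem_nhdsWithin] with t ht
      exact (tril_eq t ht).symm
    · have : Tendsto (fun t : ℂ => τL29 + t • D0) (𝓝 0) (𝓝 (τL29 + (0:ℂ) • D0)) := by
        exact (continuous_const.add (continuous_id.smul continuous_const)).tendsto 0
      simpa using this.mono_left nhdsWithin_le_nhds
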